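/- For all n ≥ 0, c_1²·α^n + c_2²·β^n + c_3²·γ^n + c_4²·δ^n = (1/563)·S_n, where S_n is the Tetranacci-type sequence with S_0 = 40, S_1 = 64, S_2 = 215, S_3 = 344 and S_n = S_{n−1} + S_{n−2} + S_{n−3} + S_{n−4} for n ≥ 4. -/

import Mathlib

/-!
Let `p = X⁴ - X³ - X² - X - 1`. Comparing `p` with `(X - α)(X - β)(X - γ)(X - δ)` gives Vieta's
formulas, so the denominator of `c₁` is `p'(α)` and the power sums `Pₙ = αⁿ + βⁿ + γⁿ + δⁿ` start
with `4, 1, 3, 7`. Reducing modulo `p` gives `(t² / p'(t))² = (6 + 9t + 28t² - 11t³) / 563` at every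
root `t`, so the left-hand side is `(6Pₙ + 9Pₙ₊₁ + 28Pₙ₊₂ - 11Pₙ₊₃) / 563`. Like `S`, this satisfies
the Tetranacci recurrence, and the two agree on their first four terms.
-/

/-- A Tetranacci-type sequence. -/
def seqS : ℕ → ℤ
  | 0 => 40
  | 1 => 64
  | 2 => 215
  | 3 => 344
  | n + 4 => seqS (n + 3) + seqS (n + 2) + seqS (n + 1) + seqS n

open Polynomial Finset

theorem cubic_eq_zero_of_four_roots {R : Type*} [CommRing R] [IsDomain R]
    {a b c d x₁ x₂ x₃ x₄ : R}
    (h₁ : a * x₁ ^ 3 + b * x₁ ^ 2 + c * x₁ + d = 0) (h₂ : a * x₂ ^ 3 + b * x₂ ^ 2 + c * x₂ + d = 0)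
    (h₃ : a * x₃ ^ 3 + b * x₃ ^ 2 + c * x₃ + d = 0) (h₄ : a * x₄ ^ 3 + b * x₄ ^ 2 + c * x₄ + d = 0)
    (h₁₂ : x₁ ≠ x₂) (h₁₃ : x₁ ≠ x₃) (h₁₄ : x₁ ≠ x₄) (h₂₃ : x₂ ≠ x₃) (h₂₄ : x₂ ≠ x₄)
    (h₃₄ : x₃ ≠ x₄) :
    a = 0 ∧ b = 0 ∧ c = 0 ∧ d = 0 := by
  classical
  have hcard : #({x₁, x₂, x₃, x₄} : Finset R) = 4 := by simp [*]
  have hP : (Cubic.mk a b c d).toPoly = 0 := by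
    refine eq_zero_of_degree_lt_of_eval_finset_eq_zero {x₁, x₂, x₃, x₄} ?_ ?_
    · exact hcard ▸ degree_cubic_le.trans_lt (by decide)
    · simp [Cubic.toPoly, *]
  exact Cubic.ext_iff.mp ((Cubic.toPoly_eq_zero_iff _).mp hP)

section TetranacciPolynomial

variable {R : Type*} [CommRing R] [IsDomain R] {x₁ x₂ x₃ x₄ : R}

theorem tetranacci_vieta
    (h₁ : x₁ ^ 4 - x₁ ^ 3 - x₁ ^ 2 - x₁ - 1 = 0) (h₂ : x₂ ^ 4 - x₂ ^ 3 - x₂ ^ 2 - x₂ - 1 = 0)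
    (h₃ : x₃ ^ 4 - x₃ ^ 3 - x₃ ^ 2 - x₃ - 1 = 0) (h₄ : x₄ ^ 4 - x₄ ^ 3 - x₄ ^ 2 - x₄ - 1 = 0)
    (h₁₂ : x₁ ≠ x₂) (h₁₃ : x₁ ≠ x₃) (h₁₄ : x₁ ≠ x₄) (h₂₃ : x₂ ≠ x₃) (h₂₄ : x₂ ≠ x₄)
    (h₃₄ : x₃ ≠ x₄) :
    x₁ + x₂ + x₃ + x₄ = 1 ∧ x₁ * x₂ + x₁ * x₃ + x₁ * x₄ + x₂ * x₃ + x₂ * x₄ + x₃ * x₄ = -1 ∧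
      x₁ * x₂ * x₃ + x₁ * x₂ * x₄ + x₁ * x₃ * x₄ + x₂ * x₃ * x₄ = 1 := by
  -- `p x - ∏ (x - xᵢ)` is a cubic in `x` vanishing at the four roots
  obtain ⟨he₁, he₂, he₃, -⟩ := cubic_eq_zero_of_four_roots
    (a := x₁ + x₂ + x₃ + x₄ - 1)
    (b := -1 - (x₁ * x₂ + x₁ * x₃ + x₁ * x₄ + x₂ * x₃ + x₂ * x₄ + x₃ * x₄))
    (c := x₁ * x₂ * x₃ + x₁ * x₂ * x₄ + x₁ * x₃ * x₄ + x₂ * x₃ * x₄ - 1)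
    (d := -1 - x₁ * x₂ * x₃ * x₄)
    (by linear_combination h₁) (by linear_combination h₂) (by linear_combination h₃)
    (by linear_combination h₄) h₁₂ h₁₃ h₁₄ h₂₃ h₂₄ h₃₄
  exact ⟨by linear_combination he₁, by linear_combination -he₂, by linear_combination he₃⟩

theorem tetranacci_sum_pow
    (h₁ : x₁ ^ 4 - x₁ ^ 3 - x₁ ^ 2 - x₁ - 1 = 0) (h₂ : x₂ ^ 4 - x₂ ^ 3 - x₂ ^ 2 - x₂ - 1 = 0)
    (h₃ : x₃ ^ 4 - x₃ ^ 3 - x₃ ^ 2 - x₃ - 1 = 0) (h₄ : x₄ ^ 4 - x₄ ^ 3 - x₄ ^ 2 - x₄ - 1 = 0)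
    (h₁₂ : x₁ ≠ x₂) (h₁₃ : x₁ ≠ x₃) (h₁₄ : x₁ ≠ x₄) (h₂₃ : x₂ ≠ x₃) (h₂₄ : x₂ ≠ x₄)
    (h₃₄ : x₃ ≠ x₄) :
    x₁ + x₂ + x₃ + x₄ = 1 ∧ x₁ ^ 2 + x₂ ^ 2 + x₃ ^ 2 + x₄ ^ 2 = 3 ∧
      x₁ ^ 3 + x₂ ^ 3 + x₃ ^ 3 + x₄ ^ 3 = 7 := by
  obtain ⟨he₁, he₂, he₃⟩ := tetranacci_vieta h₁ h₂ h₃ h₄ h₁₂ h₁₃ h₁₄ h₂₃ h₂₄ h₃₄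
  set s := x₁ + x₂ + x₃ + x₄
  refine ⟨he₁, by linear_combination (s + 1) * he₁ - 2 * he₂, ?_⟩
  linear_combination (s ^ 2 + s + 4) * he₁ - 3 * s * he₂ + 3 * he₃

theorem tetranacci_prod_sub_eq_derivative
    (h₁ : x₁ ^ 4 - x₁ ^ 3 - x₁ ^ 2 - x₁ - 1 = 0) (h₂ : x₂ ^ 4 - x₂ ^ 3 - x₂ ^ 2 - x₂ - 1 = 0)
    (h₃ : x₃ ^ 4 - x₃ ^ 3 - x₃ ^ 2 - x₃ - 1 = 0) (h₄ : x₄ ^ 4 - x₄ ^ 3 - x₄ ^ 2 - x₄ - 1 = 0)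
    (h₁₂ : x₁ ≠ x₂) (h₁₃ : x₁ ≠ x₃) (h₁₄ : x₁ ≠ x₄) (h₂₃ : x₂ ≠ x₃) (h₂₄ : x₂ ≠ x₄)
    (h₃₄ : x₃ ≠ x₄) :
    (x₁ - x₂) * (x₁ - x₃) * (x₁ - x₄) = 4 * x₁ ^ 3 - 3 * x₁ ^ 2 - 2 * x₁ - 1 := by
  obtain ⟨he₁, he₂, he₃⟩ := tetranacci_vieta h₁ h₂ h₃ h₄ h₁₂ h₁₃ h₁₄ h₂₃ h₂₄ h₃₄
  linear_combination (-3 * x₁ ^ 2) * he₁ + 2 * x₁ * he₂ - he₃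

end TetranacciPolynomial

-- `563 = -disc p = -Res(p, p')` for `p = X⁴ - X³ - X² - X - 1`, so `p'` is invertible modulo `p`
-- with denominator `563`.
theorem tetranacci_sq_div_derivative {K : Type*} [Field K] [CharZero K] {t : K}
    (ht : t ^ 4 - t ^ 3 - t ^ 2 - t - 1 = 0) :
    (t ^ 2 / (4 * t ^ 3 - 3 * t ^ 2 - 2 * t - 1)) ^ 2
      = (6 + 9 * t + 28 * t ^ 2 - 11 * t ^ 3) / 563 := by
  have hred : t ^ 4 * 563
      = (6 + 9 * t + 28 * t ^ 2 - 11 * t ^ 3) * (4 * t ^ 3 - 3 * t ^ 2 - 2 * t - 1) ^ 2 := by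
    linear_combination (6 + 27 * t + 91 * t ^ 2 + 91 * t ^ 3 - 536 * t ^ 4 + 176 * t ^ 5) * ht
  have hd : 4 * t ^ 3 - 3 * t ^ 2 - 2 * t - 1 ≠ 0 := by
    intro hd
    have ht0 : t = 0 := by simpa [hd] using hred
    simp [ht0] at ht
  rw [div_pow, ← pow_mul, div_eq_div_iff (pow_ne_zero 2 hd) (by norm_num)]
  linear_combination hred

def tetranacci (R : Type*) [CommSemiring R] : LinearRecurrence R := ⟨4, fun _ => 1⟩

theorem tetranacci_isSolution_iff {R : Type*} [CommSemiring R] {u : ℕ → R} :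
    (tetranacci R).IsSolution u ↔ ∀ n, u (n + 4) = u n + u (n + 1) + u (n + 2) + u (n + 3) := by
  change (∀ n, u (n + 4) = ∑ i : Fin 4, 1 * u (n + i)) ↔ _
  simp [Fin.sum_univ_four]

theorem isSolution_seqS (R : Type*) [CommRing R] :
    (tetranacci R).IsSolution fun n => (seqS n : R) :=
  tetranacci_isSolution_iff.2 fun n => by simp only [seqS]; push_cast; ring

theorem seqS_eq_of_isSolution {R : Type*} [CommRing R] {u : ℕ → R}
    (hu : (tetranacci R).IsSolution u) (h₀ : u 0 = 4) (h₁ : u 1 = 1) (h₂ : u 2 = 3) (h₃ : u 3 = 7)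
    (n : ℕ) : (seqS n : R) = 6 * u n + 9 * u (n + 1) + 28 * u (n + 2) - 11 * u (n + 3) := by
  rw [tetranacci_isSolution_iff] at hu
  have hv : (tetranacci R).IsSolution
      fun n => 6 * u n + 9 * u (n + 1) + 28 * u (n + 2) - 11 * u (n + 3) :=
    tetranacci_isSolution_iff.2 fun n => by
      linear_combination 6 * hu n + 9 * hu (n + 1) + 28 * hu (n + 2) - 11 * hu (n + 3)
  refine congrFun (((tetranacci R).eq_iff_eqOn_range_order _ _ (isSolution_seqS R) hv).2 ?_) n
  have h₄ : u 4 = 15 := by rw [hu 0]; norm_num [h₀, h₁, h₂, h₃]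
  have h₅ : u 5 = 26 := by rw [hu 1]; norm_num [h₁, h₂, h₃, h₄]
  have h₆ : u 6 = 51 := by rw [hu 2]; norm_num [h₂, h₃, h₄, h₅]
  intro k hk
  simp only [tetranacci, coe_range, Set.mem_Iio] at hk
  interval_cases k <;> norm_num [seqS, h₀, h₁, h₂, h₃, h₄, h₅, h₆]

theorem tetra_c_sq (α β γ δ : ℂ)
    (hα : α ^ 4 - α ^ 3 - α ^ 2 - α - 1 = 0) (hβ : β ^ 4 - β ^ 3 - β ^ 2 - β - 1 = 0)
    (hγ : γ ^ 4 - γ ^ 3 - γ ^ 2 - γ - 1 = 0) (hδ : δ ^ 4 - δ ^ 3 - δ ^ 2 - δ - 1 = 0)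
    (hαβ : α ≠ β) (hαγ : α ≠ γ) (hαδ : α ≠ δ) (hβγ : β ≠ γ) (hβδ : β ≠ δ) (hγδ : γ ≠ δ)
    (c₁ c₂ c₃ c₄ : ℂ)
    (hc₁ : c₁ = α ^ 2 / ((α - β) * (α - γ) * (α - δ)))
    (hc₂ : c₂ = β ^ 2 / ((β - α) * (β - γ) * (β - δ)))
    (hc₃ : c₃ = γ ^ 2 / ((γ - α) * (γ - β) * (γ - δ)))
    (hc₄ : c₄ = δ ^ 2 / ((δ - α) * (δ - β) * (δ - γ))) (n : ℕ) :
    c₁ ^ 2 * α ^ n + c₂ ^ 2 * β ^ n + c₃ ^ 2 * γ ^ n + c₄ ^ 2 * δ ^ n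
      = (1 / 563 : ℂ) * seqS n := by
  obtain ⟨hp₁, hp₂, hp₃⟩ := tetranacci_sum_pow hα hβ hγ hδ hαβ hαγ hαδ hβγ hβδ hγδ
  have hP : (tetranacci ℂ).IsSolution fun k => α ^ k + β ^ k + γ ^ k + δ ^ k :=
    tetranacci_isSolution_iff.2 fun k => by
      linear_combination α ^ k * hα + β ^ k * hβ + γ ^ k * hγ + δ ^ k * hδ
  rw [hc₁, hc₂, hc₃, hc₄,
    tetranacci_prod_sub_eq_derivative hα hβ hγ hδ hαβ hαγ hαδ hβγ hβδ hγδ,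
    tetranacci_prod_sub_eq_derivative hβ hα hγ hδ hαβ.symm hβγ hβδ hαγ hαδ hγδ,
    tetranacci_prod_sub_eq_derivative hγ hα hβ hδ hαγ.symm hβγ.symm hγδ hαβ hαδ hβδ,
    tetranacci_prod_sub_eq_derivative hδ hα hβ hγ hαδ.symm hβδ.symm hγδ.symm hαβ hαγ hβγ,
    tetranacci_sq_div_derivative hα, tetranacci_sq_div_derivative hβ,
    tetranacci_sq_div_derivative hγ, tetranacci_sq_div_derivative hδ,
    seqS_eq_of_isSolution hP (by norm_num) (by simpa using hp₁) hp₂ hp₃]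
  ring
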